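/- Let Γ ⊂ ℂⁿ be compact, Π : ℂⁿ → ℂᵖ a polynomial map, Ω the unbounded component of ℂᵖ \ Π(Γ), and Γ_Π := Π⁻¹(ℂᵖ \ Ω). Then hull(Γ,p) ⊆ ⋂_Π Γ_Π, where the intersection runs over all polynomial maps Π : ℂⁿ → ℂᵖ. Moreover for p = 1 equality holds: ⋂_Π Γ_Π = Γ̂, the classical polynomial hull. -/

import Mathlib

open MeasureTheory Metric Set Filter Bornology Topology

noncomputable section

/-- `ℂⁿ` with its Euclidean structure. -/
abbrev CSp (n : ℕ) := EuclideanSpace ℂ (Fin n)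

instance (n : ℕ) : MeasureSpace (CSp n) :=
  { volume := (volume : Measure (∀ _ : Fin n, ℂ)).map (MeasurableEquiv.toLp 2 (∀ _ : Fin n, ℂ)) }
instance (n : ℕ) : BorelSpace (CSp n) := (inferInstance : BorelSpace (WithLp 2 (∀ _ : Fin n, ℂ)))
/-- The union of the unbounded connected components of the complement of `K` in `ℂᵖ`. -/
def unbddCompl {p : ℕ} (K : Set (CSp p)) : Set (CSp p) :=
  ⋃₀ {C | C ⊆ Kᶜ ∧ IsConnected C ∧ ¬Bornology.IsBounded C}

/-- `U` is relatively open in `V`. -/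
def RelOpen {n : ℕ} (V U : Set (CSp n)) : Prop := ∃ O, IsOpen O ∧ U = V ∩ O

/-- `f` is holomorphic along `V` on `W ⊆ V`: near each point of `W` it extends to a
holomorphic map of a full neighbourhood in `ℂⁿ` (for `V` open this is just holomorphy on `W`;
for `V` a submanifold this is the usual notion of holomorphy on `V`). -/
def HolomorphicAlong {n q : ℕ} (V W : Set (CSp n)) (f : CSp n → CSp q) : Prop :=
  ∀ a ∈ W, ∃ O : Set (CSp n), IsOpen O ∧ a ∈ O ∧
    ∃ g : CSp n → CSp q, DifferentiableOn ℂ g O ∧ ∀ x ∈ O ∩ V, g x = f x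

/-- `X` is a `p`-pseudoconcave subset of (the complex manifold) `V`: `X` is closed in `V` and
for every relatively open `U ⊂⊂ V` and every holomorphic map `f` from a neighbourhood of the
closure of `U` (in `V`) into `ℂᵖ`, `f(X ∩ U)` avoids the unbounded component of
`ℂᵖ \ f(X ∩ ∂U)`, where `∂U = closure U \ U` is the boundary of `U` in `V`. -/
def IsPseudoconcave {n : ℕ} (p : ℕ) (V X : Set (CSp n)) : Prop :=
  X ⊆ V ∧ (V ∩ closure X ⊆ X) ∧
  ∀ U : Set (CSp n), RelOpen V U → IsCompact (closure U) → closure U ⊆ V →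
    ∀ W : Set (CSp n), RelOpen V W → closure U ⊆ W →
      ∀ f : CSp n → CSp p, HolomorphicAlong V W f →
        f '' (X ∩ U) ⊆ (unbddCompl (f '' (X ∩ (closure U \ U))))ᶜ
/-- The polynomial `p`-hull of a compact `Γ ⊆ ℂⁿ`: `Γ` together with the union of all
`p`-pseudoconcave subsets of `ℂⁿ \ Γ` which are bounded in `ℂⁿ`. -/
def pHull {n : ℕ} (p : ℕ) (Γ : Set (CSp n)) : Set (CSp n) :=
  Γ ∪ ⋃₀ {S | IsPseudoconcave p Γᶜ S ∧ Bornology.IsBounded S}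

/-- The classical polynomial hull `Γ̂` of a compact `Γ ⊆ ℂⁿ`. -/
def polyHull {n : ℕ} (Γ : Set (CSp n)) : Set (CSp n) :=
  {x | ∀ P : MvPolynomial (Fin n) ℂ,
    ‖MvPolynomial.eval (fun i => x i) P‖ ≤
      sSup ((fun z : CSp n => ‖MvPolynomial.eval (fun i => z i) P‖) '' Γ)}
/-- The polynomial map `ℂⁿ → ℂᵖ` determined by a `p`-tuple of polynomials. -/
def polyMap {n p : ℕ} (P : Fin p → MvPolynomial (Fin n) ℂ) (x : CSp n) : CSp p :=
  WithLp.toLp 2 (fun j => MvPolynomial.eval (fun i => x i) (P j))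

/-- For a polynomial map `Π : ℂⁿ → ℂᵖ`, the set `Γ_Π = Π⁻¹(ℂᵖ \ Ω)` where `Ω` is the
unbounded component of `ℂᵖ \ Π(Γ)`. -/
def GammaPi {n p : ℕ} (Γ : Set (CSp n)) (P : Fin p → MvPolynomial (Fin n) ℂ) :
    Set (CSp n) :=
  polyMap P ⁻¹' (unbddCompl (polyMap P '' Γ))ᶜ

/-!
A bounded `p`-pseudoconcave set `S ⊆ ℂⁿ \ Γ` cannot meet `Π⁻¹(Ω)`: if `Π x ∈ Ω` for some
`x ∈ S`, then `Π x` can be joined to infinity by a connected set staying a fixed distance `δ`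
away from `Π(Γ)`. Cutting `S` off near `Γ` by a domain `U ∋ x` whose boundary lies so close to
`Γ` that `Π(S ∩ ∂U)` is within `δ` of `Π(Γ)` contradicts pseudoconcavity for `f = Π`.

For `p = 1`, a polynomial `Q` with `|Q(x)| > max_Γ |Q|` puts `Q(x)` in the unbounded component
of `ℂ \ Q(Γ)`. Conversely, if `w` lies in the unbounded component of `ℂ \ K`, then `w` is not in
the spectrum of the coordinate `z` in the uniform closure of the polynomials on `K`, since the
boundary of that spectrum lies in `K`; approximating `(w - z)⁻¹` by a polynomial `q` on `K` gives
the polynomial `1 - (w - z) q`, equal to `1` at `w` and at most `1/2` on `K`.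
-/

section NormedSpace

variable {E : Type*} [NormedAddCommGroup E] [NormedSpace ℝ E]

theorem exists_isConnected_not_isBounded_norm_ge (y : E) (hy : y ≠ 0) :
    ∃ T : Set E, IsConnected T ∧ ¬IsBounded T ∧ y ∈ T ∧ ∀ z ∈ T, ‖y‖ ≤ ‖z‖ := by
  have hnorm : ∀ t : ℝ, 1 ≤ t → ‖t • y‖ = t * ‖y‖ := fun t ht => by
    rw [norm_smul, Real.norm_of_nonneg (zero_le_one.trans ht)]
  refine ⟨(· • y) '' Ici (1 : ℝ), isConnected_Ici.image _ (by fun_prop),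
    fun hb => ?_, ⟨1, self_mem_Ici, one_smul ℝ y⟩, ?_⟩
  · obtain ⟨c, hc⟩ := isBounded_iff_forall_norm_le.1 hb
    have hy' : 0 < ‖y‖ := norm_pos_iff.2 hy
    set t := max 1 ((c + 1) / ‖y‖)
    have hct : c + 1 ≤ t * ‖y‖ := (div_le_iff₀ hy').1 (le_max_right _ _)
    have := hc _ ⟨t, mem_Ici.2 (le_max_left _ _), rfl⟩
    rw [hnorm t (le_max_left _ _)] at this
    linarith
  · rintro _ ⟨t, ht, rfl⟩
    rw [hnorm t ht]
    exact le_mul_of_one_le_left (norm_nonneg y) ht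

theorem exists_isConnected_not_isBounded_disjoint_thickening {K C : Set E} (hK : IsCompact K)
    (hCK : C ⊆ Kᶜ) (hC : IsConnected C) (hCu : ¬IsBounded C) {v : E} (hv : v ∈ C) :
    ∃ δ > 0, ∃ T : Set E, IsConnected T ∧ ¬IsBounded T ∧ v ∈ T ∧ Disjoint T (thickening δ K) := by
  obtain ⟨r, hr, hKr⟩ := hK.isBounded.subset_closedBall_lt 0 0
  obtain ⟨y, hyC, hy⟩ : ∃ y ∈ C, r + 1 < ‖y‖ := by
    by_contra! h
    exact hCu (isBounded_iff_forall_norm_le.2 ⟨r + 1, h⟩)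
  have hΩ : IsPathConnected (connectedComponentIn Kᶜ v) :=
    hK.isClosed.isOpen_compl.connectedComponentIn.isConnected_iff_isPathConnected.1
      (isConnected_connectedComponentIn_iff.2 (hCK hv))
  have hCΩ := hC.isPreconnected.subset_connectedComponentIn hv hCK
  obtain ⟨γ, hγ⟩ := hΩ.joinedIn v (hCΩ hv) y (hCΩ hyC)
  have hKγ : K ⊆ (range γ)ᶜ := by
    rintro k hk ⟨t, rfl⟩
    exact connectedComponentIn_subset _ _ (hγ t) hk
  obtain ⟨δ, hδ, hδγ⟩ :=
    hK.exists_thickening_subset_open (isCompact_range γ.continuous).isClosed.isOpen_compl hKγ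
  obtain ⟨R, hR, hRu, hyR, hRy⟩ :=
    exists_isConnected_not_isBounded_norm_ge y (norm_pos_iff.1 (by linarith))
  refine ⟨min δ 1, by positivity, range γ ∪ R, (isConnected_range γ.continuous).union
    ⟨y, ⟨1, γ.target⟩, hyR⟩ hR, fun hb => hRu (hb.subset subset_union_right),
    Or.inl ⟨0, γ.source⟩, disjoint_union_left.2 ⟨?_, ?_⟩⟩
  · exact disjoint_right.2 fun z hz => hδγ (thickening_mono (min_le_left _ _) K hz)
  · refine disjoint_left.2 fun z hzR hz => ?_
    obtain ⟨k, hk, hzk⟩ := mem_thickening_iff.1 hz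
    have hkr : ‖k‖ ≤ r := mem_closedBall_zero_iff.1 (hKr hk)
    have hzk' : ‖z‖ ≤ ‖k‖ + dist z k := by
      rw [dist_eq_norm]; exact norm_le_norm_add_norm_sub' z k
    have := hRy z hzR
    have := min_le_right δ 1
    linarith

end NormedSpace

section UnboundedComponent

variable {p : ℕ}

theorem unbddCompl_subset_compl (K : Set (CSp p)) : unbddCompl K ⊆ Kᶜ :=
  sUnion_subset fun _ hC => hC.1

theorem unbddCompl_anti {K L : Set (CSp p)} (h : K ⊆ L) : unbddCompl L ⊆ unbddCompl K :=
  sUnion_mono fun _ hC => ⟨hC.1.trans (compl_subset_compl.2 h), hC.2⟩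

theorem exists_pos_mem_unbddCompl_thickening {K : Set (CSp p)} (hK : IsCompact K) {v : CSp p}
    (hv : v ∈ unbddCompl K) : ∃ δ > 0, v ∈ unbddCompl (thickening δ K) := by
  obtain ⟨C, ⟨hCK, hC, hCu⟩, hvC⟩ := hv
  obtain ⟨δ, hδ, T, hT, hTu, hvT, hTK⟩ :=
    exists_isConnected_not_isBounded_disjoint_thickening hK hCK hC hCu hvC
  exact ⟨δ, hδ, T, ⟨hTK.subset_compl_right, hT, hTu⟩, hvT⟩

theorem mem_unbddCompl_of_norm_lt {K : Set (CSp p)} {r : ℝ} {y : CSp p}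
    (hK : ∀ v ∈ K, ‖v‖ ≤ r) (hr : 0 ≤ r) (hy : r < ‖y‖) : y ∈ unbddCompl K := by
  obtain ⟨T, hT, hTu, hyT, hTy⟩ :=
    exists_isConnected_not_isBounded_norm_ge y (norm_pos_iff.1 (hr.trans_lt hy))
  exact ⟨T, ⟨fun z hz hzK => ((hK z hzK).trans_lt hy).not_ge (hTy z hz), hT, hTu⟩, hyT⟩

end UnboundedComponent

theorem Differentiable.holomorphicAlong {n q : ℕ} {f : CSp n → CSp q} (hf : Differentiable ℂ f)
    (V W : Set (CSp n)) : HolomorphicAlong V W f :=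
  fun a _ => ⟨univ, isOpen_univ, mem_univ a, f, hf.differentiableOn, fun _ _ => rfl⟩

theorem differentiable_eval_euclidean {n : ℕ} (Q : MvPolynomial (Fin n) ℂ) :
    Differentiable ℂ fun z : CSp n => MvPolynomial.eval (fun i => z i) Q := fun z =>
  (AnalyticAt.aeval_mvPolynomial (A := ℂ) (f := fun z : CSp n => fun i => z i)
    (fun i => (EuclideanSpace.proj i : CSp n →L[ℂ] ℂ).analyticAt z) Q).differentiableAt

theorem differentiable_polyMap {n q : ℕ} (P : Fin q → MvPolynomial (Fin n) ℂ) :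
    Differentiable ℂ (polyMap P) :=
  differentiable_euclidean.2 fun j => differentiable_eval_euclidean (P j)

theorem IsPseudoconcave.subset_preimage_compl_unbddCompl {n p : ℕ} {Γ S : Set (CSp n)}
    (hS : IsPseudoconcave p Γᶜ S) (hSb : IsBounded S) (hΓ : IsCompact Γ) {f : CSp n → CSp p}
    (hf : Differentiable ℂ f) : S ⊆ f ⁻¹' (unbddCompl (f '' Γ))ᶜ := by
  intro x hxS hx
  obtain ⟨δ, hδ, hxδ⟩ := exists_pos_mem_unbddCompl_thickening (hΓ.image hf.continuous) hx
  obtain ⟨ε, hε, hεΓ⟩ := hΓ.exists_cthickening_subset_open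
    ((isOpen_thickening.preimage hf.continuous).inter isOpen_compl_singleton)
    fun z hz => ⟨self_subset_thickening hδ _ (mem_image_of_mem f hz),
      fun hzx => hS.1 hxS (by rwa [mem_singleton_iff.1 hzx] at hz)⟩
  obtain ⟨R, hSR⟩ := hSb.subset_ball 0
  set U := Γᶜ ∩ ((cthickening ε Γ)ᶜ ∩ ball 0 R)
  have hclU : closure U ⊆ (thickening ε Γ)ᶜ ∩ closedBall 0 R :=
    closure_minimal (fun z hz => ⟨fun h => hz.2.1 (thickening_subset_cthickening ε Γ h),
      ball_subset_closedBall hz.2.2⟩) (isOpen_thickening.isClosed_compl.inter isClosed_closedBall)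
  have hclUΓ : closure U ⊆ Γᶜ := fun z hz hzΓ => (hclU hz).1 (self_subset_thickening hε Γ hzΓ)
  have hbdry : f '' (S ∩ (closure U \ U)) ⊆ thickening δ (f '' Γ) := by
    rintro _ ⟨z, ⟨hzS, -, hzU⟩, rfl⟩
    by_cases hz : z ∈ cthickening ε Γ
    · exact (hεΓ hz).1
    · exact absurd ⟨hS.1 hzS, hz, hSR hzS⟩ hzU
  exact hS.2.2 U ⟨_, isClosed_cthickening.isOpen_compl.inter isOpen_ball, rfl⟩
    ((isCompact_closedBall 0 R).of_isClosed_subset isClosed_closure fun z hz => (hclU hz).2)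
    hclUΓ Γᶜ ⟨Γᶜ, hΓ.isClosed.isOpen_compl, (inter_self _).symm⟩ hclUΓ f
    (hf.holomorphicAlong _ _)
    (mem_image_of_mem f ⟨hxS, hS.1 hxS, fun h => (hεΓ h).2 rfl, hSR hxS⟩)
    (unbddCompl_anti hbdry hxδ)

theorem pHull_subset_GammaPi {n p : ℕ} {Γ : Set (CSp n)} (hΓ : IsCompact Γ)
    (P : Fin p → MvPolynomial (Fin n) ℂ) : pHull p Γ ⊆ GammaPi Γ P := by
  rintro x (hxΓ | ⟨S, ⟨hS, hSb⟩, hxS⟩)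
  · exact fun hx => unbddCompl_subset_compl _ hx (mem_image_of_mem _ hxΓ)
  · exact hS.subset_preimage_compl_unbddCompl hSb hΓ (differentiable_polyMap P) hxS

open Polynomial in
theorem exists_polynomial_eval_eq_one_norm_le_half {K C : Set ℂ} (hK : IsCompact K)
    (hCK : C ⊆ Kᶜ) (hC : IsConnected C) (hCu : ¬IsBounded C) {w : ℂ} (hw : w ∈ C) :
    ∃ r : ℂ[X], r.eval w = 1 ∧ ∀ z ∈ K, ‖r.eval z‖ ≤ 1 / 2 := by
  have : CompactSpace K := isCompact_iff_compactSpace.1 hK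
  set S := (polynomialFunctions K).topologicalClosure
  have : IsClosed (S : Set C(K, ℂ)) := (polynomialFunctions K).isClosed_topologicalClosure
  set ι : S := ⟨X.toContinuousMapOn K,
    (polynomialFunctions K).le_topologicalClosure (Subalgebra.mem_map.2 ⟨X, Algebra.mem_top, rfl⟩)⟩
  have hσ : spectrum ℂ (ι : C(K, ℂ)) = K := by
    rw [ContinuousMap.spectrum_eq_range]
    ext; simp [ι]
  have hwσ : w ∉ spectrum ℂ ι := fun h => hCu <|
    (Subalgebra.spectrum_isBounded_connectedComponentIn S ι h).subset
      (by rw [hσ]; exact hC.isPreconnected.subset_connectedComponentIn hw hCK)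
  obtain ⟨u, hu⟩ := spectrum.notMem_iff.1 hwσ
  set m : C(K, ℂ) := ((u : S) : C(K, ℂ))
  have hm : ∀ z, m z = w - z := fun z => by simp [m, hu, ι]
  have hmu : m * ((u⁻¹ : Sˣ) : S) = 1 := congrArg Subtype.val u.mul_inv
  have hu' : ((u⁻¹ : Sˣ) : C(K, ℂ)) ∈ closure (polynomialFunctions K : Set C(K, ℂ)) := by
    rw [← Subalgebra.topologicalClosure_coe]; exact ((u⁻¹ : Sˣ) : S).2
  obtain ⟨_, ⟨q, -, rfl⟩, hq⟩ :=
    Metric.mem_closure_iff.1 hu' (1 / (2 * (‖m‖ + 1))) (by positivity)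
  refine ⟨1 - (Polynomial.C w - X) * q, by simp, fun z hz => ?_⟩
  calc ‖(1 - (Polynomial.C w - X) * q).eval z‖
      = ‖(m * (((u⁻¹ : Sˣ) : S) - toContinuousMapOnAlgHom K q) : C(K, ℂ)) ⟨z, hz⟩‖ := by
        rw [mul_sub, hmu]; simp [hm]
    _ ≤ ‖m‖ * ‖((u⁻¹ : Sˣ) : C(K, ℂ)) - toContinuousMapOnAlgHom K q‖ :=
        (ContinuousMap.norm_coe_le_norm _ _).trans (norm_mul_le _ _)
    _ ≤ (‖m‖ + 1) * (1 / (2 * (‖m‖ + 1))) := by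
        rw [← dist_eq_norm]; exact mul_le_mul (by linarith) hq.le dist_nonneg (by positivity)
    _ = 1 / 2 := by field_simp

section OneDimensional

variable {n : ℕ}

theorem singleton_repr_symm_polyMap (P : Fin 1 → MvPolynomial (Fin n) ℂ) (z : CSp n) :
    (OrthonormalBasis.singleton (Fin 1) ℂ).repr.symm (polyMap P z) =
      MvPolynomial.eval (fun i => z i) (P 0) := by
  rw [LinearIsometryEquiv.symm_apply_eq]
  ext i
  fin_cases i
  simp [polyMap]

theorem norm_polyMap_fin_one (P : Fin 1 → MvPolynomial (Fin n) ℂ) (z : CSp n) :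
    ‖polyMap P z‖ = ‖MvPolynomial.eval (fun i => z i) (P 0)‖ := by
  rw [← singleton_repr_symm_polyMap]
  exact (LinearIsometryEquiv.norm_map _ _).symm

theorem iInter_GammaPi_subset_polyHull {Γ : Set (CSp n)} (hΓ : IsCompact Γ) :
    (⋂ P : Fin 1 → MvPolynomial (Fin n) ℂ, GammaPi Γ P) ⊆ polyHull Γ := by
  intro x hx Q
  set M := sSup ((fun z : CSp n => ‖MvPolynomial.eval (fun i => z i) Q‖) '' Γ)
  have hbdd := (hΓ.image (differentiable_eval_euclidean Q).continuous.norm).bddAbove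
  by_contra! hlt
  refine mem_iInter.1 hx (fun _ => Q) (mem_unbddCompl_of_norm_lt (r := M) ?_
    (Real.sSup_nonneg (by rintro _ ⟨_, _, rfl⟩; positivity)) ?_)
  · rintro _ ⟨z, hz, rfl⟩
    rw [norm_polyMap_fin_one]
    exact le_csSup hbdd ⟨z, hz, rfl⟩
  · rwa [norm_polyMap_fin_one]

theorem polyHull_subset_GammaPi {Γ : Set (CSp n)} (hΓ : IsCompact Γ)
    (P : Fin 1 → MvPolynomial (Fin n) ℂ) : polyHull Γ ⊆ GammaPi Γ P := by
  rintro x hx ⟨C, ⟨hCK, hC, hCu⟩, hxC⟩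
  set e := (OrthonormalBasis.singleton (Fin 1) ℂ).repr
  obtain ⟨r, hrx, hrΓ⟩ := exists_polynomial_eval_eq_one_norm_le_half
    (e.toHomeomorph.isCompact_preimage.2 (hΓ.image (differentiable_polyMap P).continuous))
    (preimage_mono hCK) (e.toHomeomorph.isConnected_preimage.2 hC)
    (fun hb => hCu (by
      simpa [image_preimage_eq C e.surjective] using e.lipschitz.isBounded_image hb))
    (w := e.symm (polyMap P x)) (by simpa)
  have heval : ∀ z : CSp n, MvPolynomial.eval (fun i => z i) (Polynomial.aeval (P 0) r) =
      r.eval (e.symm (polyMap P z)) := fun z => by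
    simpa [e, MvPolynomial.coe_aeval_eq_eval, singleton_repr_symm_polyMap] using
      (Polynomial.aeval_algHom_apply (MvPolynomial.aeval fun i => z i) (P 0) r).symm
  have hsup : sSup ((fun z : CSp n => ‖MvPolynomial.eval (fun i => z i)
      (Polynomial.aeval (P 0) r)‖) '' Γ) ≤ 1 / 2 := by
    refine Real.sSup_le ?_ (by norm_num)
    rintro _ ⟨z, hz, rfl⟩
    dsimp only
    rw [heval]
    exact hrΓ _ (by simpa using mem_image_of_mem _ hz)
  have := hx (Polynomial.aeval (P 0) r)
  rw [heval, hrx, norm_one] at this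
  linarith

end OneDimensional

theorem pHull_subset_polyMapHull_general {n : ℕ} (p : ℕ)
    (Γ : Set (CSp n)) (hΓ : IsCompact Γ) :
    (pHull p Γ ⊆ ⋂ P : Fin p → MvPolynomial (Fin n) ℂ, GammaPi Γ P) ∧
      (p = 1 → (⋂ P : Fin p → MvPolynomial (Fin n) ℂ, GammaPi Γ P) = polyHull Γ) := by
  refine ⟨subset_iInter fun P => pHull_subset_GammaPi hΓ P, ?_⟩
  rintro rfl
  exact (iInter_GammaPi_subset_polyHull hΓ).antisymm
    (subset_iInter fun P => polyHull_subset_GammaPi hΓ P)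

/-- For `Γ ⊆ ℂⁿ` compact, the polynomial `p`-hull `hull(Γ,p)` is contained in
`⋂_Π Γ_Π`, the intersection over all polynomial maps `Π : ℂⁿ → ℂᵖ`; moreover for `p = 1`
the latter intersection equals the classical polynomial hull `Γ̂`. -/
theorem pHull_subset_polyMapHull {n : ℕ} (p : ℕ) (hp : 1 ≤ p)
    (Γ : Set (CSp n)) (hΓ : IsCompact Γ) :
    (pHull p Γ ⊆ ⋂ P : Fin p → MvPolynomial (Fin n) ℂ, GammaPi Γ P) ∧
      (p = 1 → (⋂ P : Fin p → MvPolynomial (Fin n) ℂ, GammaPi Γ P) = polyHull Γ) :=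
  pHull_subset_polyMapHull_general p Γ hΓ
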